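/- arXiv:2304.14539 — 2 statements merged into one kernel-verified Lean document; each statement's English description precedes it below -/
import Mathlib

section
/- Derivability of the weakest liberal precondition: if the procedure specification map 𝔠 is adequate for ψ given the procedure definitions 𝒞 (i.e., for every X, fst(𝔠(X)) is logically equivalent to wlp(𝒞(X), ψ) and snd(𝔠(X)) = ψ), then for every choreography C the judgement ⊢_𝔠 {wlp(C,ψ)} C {ψ} is derivable. -/
attribute [local instance] Classical.propDecidable

/-- A choreographic language signature: local expression signature and its
interpretation, Boolean values, process names, program variables, procedure
names, selection labels, and a decidable background theory `D`. -/
structure Lang : Type 1 where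
  Sig : ℕ → Type
  Val : Type
  interp : {n : ℕ} → Sig n → (Fin n → Val) → Val
  tt : Val
  ff : Val
  tt_ne_ff : tt ≠ ff
  P : Type
  V : Type
  PN : Type
  Lbl : Type
  D : Type
  Dtrue : D → Prop

/-- Expressions freely generated from the signature, values, and variables `W`. -/
inductive Expr (L : Lang) (W : Type) : Type where
  | var : W → Expr L W
  | val : L.Val → Expr L W
  | op : {n : ℕ} → L.Sig n → (Fin n → Expr L W) → Expr L W

def Expr.eval {L : Lang} {W : Type} (σ : W → L.Val) : Expr L W → L.Val
  | .var x => σ x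
  | .val v => v
  | .op s args => L.interp s (fun i => (args i).eval σ)

def Expr.map {L : Lang} {W W' : Type} (f : W → W') : Expr L W → Expr L W'
  | .var x => .var (f x)
  | .val v => .val v
  | .op s args => .op s (fun i => (args i).map f)

/-- Localisation of a local expression at process `p`: replace each variable
`x` by the localised variable `p.x`. -/
def loc {L : Lang} (p : L.P) (e : Expr L L.V) : Expr L (L.P × L.V) :=
  e.map (fun x => (p, x))

/-- Local states. -/
abbrev LState (L : Lang) := L.V → L.Val
/-- Global states. -/
abbrev GState (L : Lang) := L.P → LState L

/-- Evaluation of a localised expression under a global state. -/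
def evalG {L : Lang} (S : GState L) (E : Expr L (L.P × L.V)) : L.Val :=
  E.eval (fun w => S w.1 w.2)

/-- Replace every occurrence of the localised variable `q.x` by `E'`. -/
noncomputable def Expr.substLoc {L : Lang} (q : L.P) (x : L.V)
    (E' : Expr L (L.P × L.V)) : Expr L (L.P × L.V) → Expr L (L.P × L.V)
  | .var w => if w = (q, x) then E' else .var w
  | .val v => .val v
  | .op s args => .op s (fun i => Expr.substLoc q x E' (args i))

/-- State formulas: atomic equalities `E = X` between a localised expression
and a logical variable, atoms of the decidable theory `D`, conjunction, and
negation. Logical variables are natural numbers. -/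
inductive Formula (L : Lang) : Type where
  | eq : Expr L (L.P × L.V) → ℕ → Formula L
  | atom : L.D → Formula L
  | and : Formula L → Formula L → Formula L
  | not : Formula L → Formula L

def Formula.imp {L : Lang} (a b : Formula L) : Formula L := .not (.and a (.not b))

/-- Satisfaction of a state formula under a global state and an assignment of
logical variables. -/
def Sat {L : Lang} (S : GState L) (ρ : ℕ → L.Val) : Formula L → Prop
  | .eq E X => evalG S E = ρ X
  | .atom d => L.Dtrue d
  | .and a b => Sat S ρ a ∧ Sat S ρ b
  | .not a => ¬ Sat S ρ a

/-- Validity: satisfied in every state under every assignment. -/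
def Valid {L : Lang} (φ : Formula L) : Prop := ∀ S ρ, Sat S ρ φ

/-- Logical equivalence of state formulas. -/
def FEquiv {L : Lang} (a b : Formula L) : Prop := ∀ S ρ, Sat S ρ a ↔ Sat S ρ b

/-- Localised substitution: replace `q.x` by the localisation of `e` at `p`. -/
noncomputable def Formula.subst {L : Lang} (q : L.P) (x : L.V) (p : L.P)
    (e : Expr L L.V) : Formula L → Formula L
  | .eq E X => .eq (E.substLoc q x (loc p e)) X
  | .atom d => .atom d
  | .and a b => .and (a.subst q x p e) (b.subst q x p e)
  | .not a => .not (a.subst q x p e)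

/-- Logical variables occurring in a formula. -/
def Formula.lvars {L : Lang} : Formula L → Finset ℕ
  | .eq _ X => {X}
  | .atom _ => ∅
  | .and a b => a.lvars ∪ b.lvars
  | .not a => a.lvars

/-- A logical variable fresh for `φ`. -/
def freshVar {L : Lang} (φ : Formula L) : ℕ := φ.lvars.sup id + 1

/-- The abbreviation `loc_p(b) ≐_X v`, i.e. `loc_p(b) = X ∧ X = v`. -/
def condF {L : Lang} (p : L.P) (b : Expr L L.V) (X : ℕ) (v : L.Val) : Formula L :=
  .and (.eq (loc p b) X) (.eq (.val v) X)

/-- An unsatisfiable formula. -/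
def Formula.bot (L : Lang) : Formula L :=
  .and (.eq (.val L.tt) 0) (.not (.eq (.val L.tt) 0))
/-- A valid formula. -/
def Formula.top (L : Lang) : Formula L := .not (Formula.bot L)

/-- Choreographies. -/
inductive Chor (L : Lang) : Type where
  | assign : L.P → L.V → Expr L L.V → Chor L → Chor L
  | com : L.P → Expr L L.V → L.P → L.V → Chor L → Chor L
  | sel : L.P → L.P → L.Lbl → Chor L → Chor L
  | cond : L.P → Expr L L.V → Chor L → Chor L → Chor L
  | call : L.PN → Chor L
  | callIn : L.PN → Set L.P → Chor L → Chor L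
  | nil : Chor L

/-- Instructions. -/
inductive Instr (L : Lang) : Type where
  | assign : L.P → L.V → Expr L L.V → Instr L
  | com : L.P → Expr L L.V → L.P → L.V → Instr L
  | sel : L.P → L.P → L.Lbl → Instr L

/-- Sequencing an instruction in front of a choreography. -/
def Instr.seq {L : Lang} : Instr L → Chor L → Chor L
  | .assign p x e, C => .assign p x e C
  | .com p e q x, C => .com p e q x C
  | .sel p q l, C => .sel p q l C

/-- Processes involved in a choreography. -/
def Chor.pn {L : Lang} : Chor L → Set L.P
  | .assign p _ _ C => {p} ∪ C.pn
  | .com p _ q _ C => {p, q} ∪ C.pn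
  | .sel p q _ C => {p, q} ∪ C.pn
  | .cond p _ C1 C2 => {p} ∪ C1.pn ∪ C2.pn
  | .call _ => Set.univ
  | .callIn _ qs C => qs ∪ C.pn
  | .nil => ∅

/-- A choreography with no bare procedure calls. -/
def Chor.noCall {L : Lang} : Chor L → Prop
  | .assign _ _ _ C => C.noCall
  | .com _ _ _ _ C => C.noCall
  | .sel _ _ _ C => C.noCall
  | .cond _ _ C1 C2 => C1.noCall ∧ C2.noCall
  | .call _ => False
  | .callIn _ _ C => C.noCall
  | .nil => True

/-- Update the value of variable `x` of process `p` in a global state. -/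
noncomputable def updG {L : Lang} (S : GState L) (p : L.P) (x : L.V)
    (v : L.Val) : GState L :=
  fun q y => if q = p ∧ y = x then v else S q y

/-- Head transitions (no out-of-order execution), labelled by the set of
processes involved, parametrised by the procedure definitions `Cd`. -/
inductive HStep {L : Lang} (Cd : L.PN → Chor L) :
    Chor L → GState L → Set L.P → Chor L → GState L → Prop
  | assign {p x e C S} :
      HStep Cd (.assign p x e C) S {p} C (updG S p x (e.eval (S p)))
  | com {p e q x C S} :
      HStep Cd (.com p e q x C) S {p, q} C (updG S q x (e.eval (S p)))
  | sel {p q l C S} : HStep Cd (.sel p q l C) S {p, q} C S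
  | condThen {p b C1 C2 S} : b.eval (S p) = L.tt →
      HStep Cd (.cond p b C1 C2) S {p} C1 S
  | condElse {p b C1 C2 S} : b.eval (S p) = L.ff →
      HStep Cd (.cond p b C1 C2) S {p} C2 S
  | call {X r S} :
      HStep Cd (.call X) S {r} (.callIn X ((Cd X).pn \ {r}) (Cd X)) S
  | enter {X qs C r S} : r ∈ qs → (qs \ {r}).Nonempty →
      HStep Cd (.callIn X qs C) S {r} (.callIn X (qs \ {r}) C) S
  | finish {X q C S} : HStep Cd (.callIn X {q} C) S {q} C S

/-- The full transition relation: head transitions plus out-of-order delay rules. -/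
inductive Step {L : Lang} (Cd : L.PN → Chor L) :
    Chor L → GState L → Set L.P → Chor L → GState L → Prop
  | head {C S μ C' S'} : HStep Cd C S μ C' S' → Step Cd C S μ C' S'
  | delayAssign {p x e C S μ C' S'} : Step Cd C S μ C' S' →
      Disjoint ({p} : Set L.P) μ →
      Step Cd (.assign p x e C) S μ (.assign p x e C') S'
  | delayCom {p e q x C S μ C' S'} : Step Cd C S μ C' S' →
      Disjoint ({p, q} : Set L.P) μ →
      Step Cd (.com p e q x C) S μ (.com p e q x C') S'
  | delaySel {p q l C S μ C' S'} : Step Cd C S μ C' S' →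
      Disjoint ({p, q} : Set L.P) μ →
      Step Cd (.sel p q l C) S μ (.sel p q l C') S'
  | delayCond {p b C1 C2 S μ C1' C2' S'} : Step Cd C1 S μ C1' S' →
      Step Cd C2 S μ C2' S' → p ∉ μ →
      Step Cd (.cond p b C1 C2) S μ (.cond p b C1' C2') S'
  | delayCall {X qs C S μ C' S'} : Step Cd C S μ C' S' → Disjoint qs μ →
      Step Cd (.callIn X qs C) S μ (.callIn X qs C') S'

/-- Multi-step head reduction. -/
def HRed {L : Lang} (Cd : L.PN → Chor L) (C : Chor L) (S : GState L)
    (C' : Chor L) (S' : GState L) : Prop :=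
  Relation.ReflTransGen
    (fun a b : Chor L × GState L => ∃ μ, HStep Cd a.1 a.2 μ b.1 b.2) (C, S) (C', S')

/-- Multi-step reduction in the full semantics. -/
def Red {L : Lang} (Cd : L.PN → Chor L) (C : Chor L) (S : GState L)
    (C' : Chor L) (S' : GState L) : Prop :=
  Relation.ReflTransGen
    (fun a b : Chor L × GState L => ∃ μ, Step Cd a.1 a.2 μ b.1 b.2) (C, S) (C', S')

/-- The Hoare calculus for choreographies, parametrised by the procedure
specification map `sp`. -/
inductive Deriv {L : Lang} (sp : L.PN → Formula L × Formula L) :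
    Formula L → Chor L → Formula L → Prop
  | nil {φ} : Deriv sp φ .nil φ
  | assign {p x e C φ φ'} : Deriv sp φ C φ' →
      Deriv sp (φ.subst p x p e) (.assign p x e C) φ'
  | com {p e q x C φ φ'} : Deriv sp φ C φ' →
      Deriv sp (φ.subst q x p e) (.com p e q x C) φ'
  | sel {p q l C φ φ'} : Deriv sp φ C φ' → Deriv sp φ (.sel p q l C) φ'
  | cond {p b C1 C2 φ ψ X} : X ∉ ψ.lvars →
      Deriv sp (φ.and (condF p b X L.tt)) C1 ψ →
      Deriv sp (φ.and (condF p b X L.ff)) C2 ψ →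
      Deriv sp φ (.cond p b C1 C2) ψ
  | call {X φ ψ} : sp X = (φ, ψ) → Deriv sp φ (.call X) ψ
  | callIn {X qs C φ ψ} : Deriv sp φ C ψ → Deriv sp φ (.callIn X qs C) ψ
  | weak {φ φ' C ψ ψ'} : Valid (φ.imp φ') → Deriv sp φ' C ψ' →
      Valid (ψ'.imp ψ) → Deriv sp φ C ψ

/-- Consistency of a procedure specification map with procedure definitions. -/
def Consistent {L : Lang} (sp : L.PN → Formula L × Formula L)
    (Cd : L.PN → Chor L) : Prop :=
  ∀ X, Deriv sp (sp X).1 (Cd X) (sp X).2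

/-- Weakest liberal precondition. -/
noncomputable def wlp {L : Lang} (sp : L.PN → Formula L × Formula L) :
    Chor L → Formula L → Formula L
  | .assign p x e C, ψ => (wlp sp C ψ).subst p x p e
  | .com p e q x C, ψ => (wlp sp C ψ).subst q x p e
  | .sel _ _ _ C, ψ => wlp sp C ψ
  | .cond p b C1 C2, ψ =>
      .and ((condF p b (freshVar ψ) L.tt).imp (wlp sp C1 ψ))
           ((condF p b (freshVar ψ) L.ff).imp (wlp sp C2 ψ))
  | .call X, _ => (sp X).1
  | .callIn _ _ C, ψ => wlp sp C ψ
  | .nil, ψ => ψ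

/-- Adequacy of a procedure specification map for a postcondition `ψ`. -/
def Adequate {L : Lang} (sp : L.PN → Formula L × Formula L)
    (Cd : L.PN → Chor L) (ψ : Formula L) : Prop :=
  ∀ X, FEquiv (sp X).1 (wlp sp (Cd X) ψ) ∧ (sp X).2 = ψ
/-- Derivability of the weakest liberal precondition: if `sp` is
adequate for `ψ` given `Cd`, then `⊢ {wlp(C,ψ)} C {ψ}` is derivable for every
choreography `C`. -/
theorem statement4 (L : Lang) (Cd : L.PN → Chor L)
    (sp : L.PN → Formula L × Formula L) (ψ : Formula L)
    (had : Adequate sp Cd ψ) :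
    ∀ C : Chor L, Deriv sp (wlp sp C ψ) C ψ := by
  have hfresh : freshVar ψ ∉ ψ.lvars := by
    intro h
    have h2 := Finset.le_sup (f := id) h
    simp only [id_eq, freshVar] at h2
    omega
  have hself : ∀ φ : Formula L, Valid (φ.imp φ) := by
    intro φ S ρ h
    exact h.2 h.1
  intro C
  induction C with
  | assign p x e C ih => exact Deriv.assign ih
  | com p e q x C ih => exact Deriv.com ih
  | sel p q l C ih => exact Deriv.sel ih
  | cond p b C1 C2 ih1 ih2 =>
    apply Deriv.cond hfresh
    · refine Deriv.weak ?_ ih1 (hself ψ)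
      intro S ρ h
      have himp : ¬(Sat S ρ (condF p b (freshVar ψ) L.tt) ∧
          ¬ Sat S ρ (wlp sp C1 ψ)) := h.1.1.1
      exact himp ⟨h.1.2, h.2⟩
    · refine Deriv.weak ?_ ih2 (hself ψ)
      intro S ρ h
      have himp : ¬(Sat S ρ (condF p b (freshVar ψ) L.ff) ∧
          ¬ Sat S ρ (wlp sp C2 ψ)) := h.1.1.2
      exact himp ⟨h.1.2, h.2⟩
  | call X =>
    have h := (had X).2
    refine Deriv.call ?_
    simp only [wlp]
    exact Prod.ext rfl h
  | callIn X qs C ih => exact Deriv.callIn ih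
  | nil => exact Deriv.nil
end

section
/- If a procedure specification map 𝔠 is adequate for a formula ψ given a set of procedure definitions 𝒞, then 𝔠 is consistent with 𝒞 (i.e., for every procedure name X, ⊢_𝔠 {fst(𝔠(X))} 𝒞(X) {snd(𝔠(X))} is derivable). -/
attribute [local instance] Classical.propDecidable

lemma freshVar_not_mem {L : Lang} (φ : Formula L) : freshVar φ ∉ φ.lvars := by
  intro h
  have h2 : id (freshVar φ) ≤ φ.lvars.sup id := Finset.le_sup h
  simp only [id, freshVar] at h2
  omega

lemma wlp_deriv {L : Lang} (sp : L.PN → Formula L × Formula L) (ψ0 : Formula L)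
    (hsnd : ∀ X, (sp X).2 = ψ0) :
    ∀ (C : Chor L) (ψ : Formula L), (ψ = ψ0 ∨ C.noCall) → Deriv sp (wlp sp C ψ) C ψ := by
  intro C
  induction C with
  | assign p x e C ih =>
      intro ψ h; exact Deriv.assign (ih ψ h)
  | com p e q x C ih =>
      intro ψ h; exact Deriv.com (ih ψ h)
  | sel p q l C ih =>
      intro ψ h; exact Deriv.sel (ih ψ h)
  | cond p b C1 C2 ih1 ih2 =>
      intro ψ h
      have h1 : ψ = ψ0 ∨ C1.noCall := by
        rcases h with h | h; · exact Or.inl h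
        · exact Or.inr h.1
      have h2 : ψ = ψ0 ∨ C2.noCall := by
        rcases h with h | h; · exact Or.inl h
        · exact Or.inr h.2
      refine Deriv.cond (X := freshVar ψ) (freshVar_not_mem ψ) ?_ ?_
      · refine Deriv.weak ?_ (ih1 ψ h1) ?_
        · intro S ρ hs
          simp only [Sat, Formula.imp, wlp] at *
          tauto
        · intro S ρ; simp [Sat, Formula.imp]
      · refine Deriv.weak ?_ (ih2 ψ h2) ?_
        · intro S ρ hs
          simp only [Sat, Formula.imp, wlp] at *
          tauto
        · intro S ρ; simp [Sat, Formula.imp]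
  | call X =>
      intro ψ h
      rcases h with h | h
      · subst h
        have : Deriv sp (sp X).1 (.call X) (sp X).2 := Deriv.call rfl
        rw [hsnd X] at this
        exact this
      · exact absurd h id
  | callIn X qs C ih =>
      intro ψ h
      have h' : ψ = ψ0 ∨ C.noCall := by
        rcases h with h | h; · exact Or.inl h
        · exact Or.inr h
      exact Deriv.callIn (ih ψ h')
  | nil =>
      intro ψ _; exact Deriv.nil

/-- adequacy implies consistency. -/
theorem statement5 (L : Lang) (Cd : L.PN → Chor L)
    (sp : L.PN → Formula L × Formula L) (ψ : Formula L)
    (had : Adequate sp Cd ψ) :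
    Consistent sp Cd := by
  intro X
  have hsnd : ∀ Y, (sp Y).2 = ψ := fun Y => (had Y).2
  have hd : Deriv sp (wlp sp (Cd X) ψ) (Cd X) ψ :=
    wlp_deriv sp ψ hsnd (Cd X) ψ (Or.inl rfl)
  rw [hsnd X]
  refine Deriv.weak ?_ hd ?_
  · intro S ρ
    have := (had X).1 S ρ
    simp only [Sat, Formula.imp]
    tauto
  · intro S ρ; simp [Sat, Formula.imp]
end
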